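/- arXiv:2503.06804 — 2 statements merged into one kernel-verified Lean document; each statement's English description precedes it below -/
import Mathlib

section
/- The function g(m) = ((m - x̄)² + q) Φ((m - x̄)/√q) + (m - x̄) √(q/(2π)) exp(-(m - x̄)²/(2q)) is nonnegative, increasing, and convex in m for fixed q > 0 and x̄ ∈ ℝ. -/
open Real MeasureTheory

/-- Standard normal CDF. -/
noncomputable def stdNormalCDF (t : ℝ) : ℝ :=
  ∫ y in Set.Iic t, (Real.sqrt (2 * Real.pi))⁻¹ * Real.exp (-(y ^ 2) / 2)

/-! With `t = (m - x̄) / √q` the penalty is `q · E[((t - Z)⁺)²]` for a standard normal `Z`.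
Indeed `((t - y)² - (t² + 1)) φ(y)` is the derivative of `(2t - y) φ(y)`, so integrating
`(t - y)² φ(y)` over `y ≤ t` gives `(t² + 1) Φ(t) + t φ(t)`. Nonnegativity, monotonicity and
convexity in `t` hold pointwise for `((t - y)⁺)²`, pass to the integral, and survive the increasing
affine change of variables `m ↦ t`. -/

open Filter Set Polynomial

theorem ConvexOn.integral {α E : Type*} [MeasurableSpace α] {μ : Measure α} [AddCommGroup E]
    [Module ℝ E] {s : Set E} {F : E → α → ℝ} (hs : Convex ℝ s)
    (hint : ∀ x ∈ s, Integrable (F x) μ) (hconv : ∀ a, ConvexOn ℝ s (F · a)) :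
    ConvexOn ℝ s fun x => ∫ a, F x a ∂μ := by
  refine ⟨hs, fun x hx y hy a b ha hb hab => ?_⟩
  calc ∫ z, F (a • x + b • y) z ∂μ
      ≤ ∫ z, (a * F x z + b * F y z) ∂μ :=
        integral_mono (hint _ (hs hx hy ha hb hab))
          (((hint x hx).const_mul a).add ((hint y hy).const_mul b))
          fun z => (hconv z).2 hx hy ha hb hab
    _ = a • ∫ z, F x z ∂μ + b • ∫ z, F y z ∂μ := by
        rw [integral_add ((hint x hx).const_mul a) ((hint y hy).const_mul b),
          integral_const_mul, integral_const_mul, smul_eq_mul, smul_eq_mul]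

noncomputable def stdNormalPDF (y : ℝ) : ℝ := (√(2 * π))⁻¹ * exp (-(y ^ 2) / 2)

lemma stdNormalPDF_pos (y : ℝ) : 0 < stdNormalPDF y := by
  unfold stdNormalPDF; positivity

lemma hasDerivAt_stdNormalPDF (y : ℝ) : HasDerivAt stdNormalPDF (-y * stdNormalPDF y) y := by
  have h : HasDerivAt (fun y : ℝ => -(y ^ 2) / 2) (-y) y :=
    ((hasDerivAt_pow 2 y).neg.div_const 2).congr_deriv (by push_cast; ring)
  exact (h.exp.const_mul _).congr_deriv (by rw [stdNormalPDF]; ring)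

lemma integrable_pow_mul_stdNormalPDF (n : ℕ) : Integrable fun y => y ^ n * stdNormalPDF y := by
  have h := (integrable_rpow_mul_exp_neg_mul_sq (b := 1 / 2) (by norm_num) (s := n)
    (by linarith [n.cast_nonneg (α := ℝ)])).const_mul (√(2 * π))⁻¹
  refine h.congr (.of_forall fun y => ?_)
  simp only [rpow_natCast, stdNormalPDF]
  ring_nf

lemma integrable_eval_mul_stdNormalPDF (p : ℝ[X]) :
    Integrable fun y => p.eval y * stdNormalPDF y := by
  induction p using Polynomial.induction_on' with
  | add p q hp hq =>
    simp only [eval_add, add_mul]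
    exact hp.add hq
  | monomial n a =>
    simpa only [eval_monomial, mul_assoc] using (integrable_pow_mul_stdNormalPDF n).const_mul a

lemma setIntegral_Iic_sq_sub_mul_stdNormalPDF (t : ℝ) :
    ∫ y in Iic t, (t - y) ^ 2 * stdNormalPDF y
      = (t ^ 2 + 1) * stdNormalCDF t + t * stdNormalPDF t := by
  have hderiv : ∀ y ∈ Iic t, HasDerivAt (fun y => (2 * t - y) * stdNormalPDF y)
      (((t - y) ^ 2 - (t ^ 2 + 1)) * stdNormalPDF y) y := fun y _ =>
    (((hasDerivAt_id y).const_sub (2 * t)).mul (hasDerivAt_stdNormalPDF y)).congr_deriv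
      (by simp only [id]; ring)
  have hint : Integrable fun y => ((t - y) ^ 2 - (t ^ 2 + 1)) * stdNormalPDF y := by
    refine (integrable_eval_mul_stdNormalPDF ((C t - X) ^ 2 - (C t ^ 2 + 1))).congr
      (.of_forall fun y => ?_)
    simp only [eval_sub, eval_add, eval_pow, eval_C, eval_X, eval_one]
  have hlim := tendsto_zero_of_hasDerivAt_of_integrableOn_Iic hderiv hint.integrableOn
    ((integrable_eval_mul_stdNormalPDF (C (2 * t) - X)).congr
      (.of_forall fun y => by simp only [eval_sub, eval_C, eval_X])).integrableOn
  have hftc := integral_Iic_of_hasDerivAt_of_tendsto' hderiv hint.integrableOn hlim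
  have hcdf : ∫ y in Iic t, (t ^ 2 + 1) * stdNormalPDF y = (t ^ 2 + 1) * stdNormalCDF t :=
    integral_const_mul _ _
  calc ∫ y in Iic t, (t - y) ^ 2 * stdNormalPDF y
      = ∫ y in Iic t, (((t - y) ^ 2 - (t ^ 2 + 1)) * stdNormalPDF y
          + (t ^ 2 + 1) * stdNormalPDF y) := by
        congr with y; ring
    _ = (t ^ 2 + 1) * stdNormalCDF t + t * stdNormalPDF t := by
        rw [integral_add hint.integrableOn
          ((integrable_eval_mul_stdNormalPDF (C (t ^ 2 + 1))).congr
            (.of_forall fun y => by simp only [eval_C])).integrableOn, hftc, hcdf]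
        ring

/-- `E[((t - Z)⁺)²]` for a standard normal `Z`; by symmetry of `Z` this is also `E[((t + Z)⁺)²]`. -/
noncomputable def expectedSqPosPart (t : ℝ) : ℝ := ∫ y, max (t - y) 0 ^ 2 * stdNormalPDF y

lemma sq_posPart_sub_mul_stdNormalPDF_eq_indicator (t : ℝ) :
    (fun y => max (t - y) 0 ^ 2 * stdNormalPDF y)
      = (Iic t).indicator fun y => (t - y) ^ 2 * stdNormalPDF y := by
  ext y
  by_cases h : y ≤ t
  · rw [indicator_of_mem (mem_Iic.2 h), max_eq_left (sub_nonneg.2 h)]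
  · rw [indicator_of_notMem (notMem_Iic.2 (not_le.1 h)), max_eq_right (by linarith),
      zero_pow two_ne_zero, zero_mul]

lemma integrable_sq_posPart_sub_mul_stdNormalPDF (t : ℝ) :
    Integrable fun y => max (t - y) 0 ^ 2 * stdNormalPDF y := by
  rw [sq_posPart_sub_mul_stdNormalPDF_eq_indicator, integrable_indicator_iff measurableSet_Iic]
  refine ((integrable_eval_mul_stdNormalPDF ((C t - X) ^ 2)).congr
    (.of_forall fun y => ?_)).integrableOn
  simp only [eval_pow, eval_sub, eval_C, eval_X]

lemma expectedSqPosPart_eq (t : ℝ) :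
    expectedSqPosPart t = (t ^ 2 + 1) * stdNormalCDF t + t * stdNormalPDF t := by
  rw [expectedSqPosPart, sq_posPart_sub_mul_stdNormalPDF_eq_indicator,
    integral_indicator measurableSet_Iic, setIntegral_Iic_sq_sub_mul_stdNormalPDF]

lemma expectedSqPosPart_nonneg (t : ℝ) : 0 ≤ expectedSqPosPart t :=
  integral_nonneg fun y => mul_nonneg (sq_nonneg _) (stdNormalPDF_pos y).le

lemma monotone_expectedSqPosPart : Monotone expectedSqPosPart := fun s t hst =>
  integral_mono (integrable_sq_posPart_sub_mul_stdNormalPDF s)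
    (integrable_sq_posPart_sub_mul_stdNormalPDF t) fun y =>
      mul_le_mul_of_nonneg_right
        (pow_le_pow_left₀ (le_max_right _ _) (max_le_max_right 0 (by linarith)) 2)
        (stdNormalPDF_pos y).le

lemma convexOn_expectedSqPosPart : ConvexOn ℝ univ expectedSqPosPart := by
  refine ConvexOn.integral convex_univ (fun t _ => integrable_sq_posPart_sub_mul_stdNormalPDF t)
    fun y => ?_
  have hpos : ConvexOn ℝ univ fun t : ℝ => max (t - y) 0 :=
    (convexOn_id convex_univ |>.sub (concaveOn_const y convex_univ)).sup
      (convexOn_const 0 convex_univ)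
  refine ((hpos.pow (fun t _ => le_max_right _ _) 2).smul (stdNormalPDF_pos y).le).congr
    fun t _ => ?_
  simp only [Pi.pow_apply, smul_eq_mul, mul_comm]

lemma mul_expectedSqPosPart_div_sqrt {q : ℝ} (hq : 0 < q) (u : ℝ) :
    q * expectedSqPosPart (u / √q)
      = (u ^ 2 + q) * stdNormalCDF (u / √q) + u * √(q / (2 * π)) * exp (-(u ^ 2) / (2 * q)) := by
  have hexp : -((u / √q) ^ 2) / 2 = -(u ^ 2) / (2 * q) := by
    rw [div_pow, sq_sqrt hq.le]; ring
  rw [expectedSqPosPart_eq, stdNormalPDF, hexp, sqrt_div hq.le]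
  have hs : √q ≠ 0 := (sqrt_pos.2 hq).ne'
  field_simp
  rw [sq_sqrt hq.le]
  ring

/-- The expected quadratic penalty, as a function of the conditional mean `m`,
is nonnegative, increasing and convex. -/
theorem penalty_nonneg_monotone_convex (q xbar : ℝ) (hq : 0 < q) :
    let g : ℝ → ℝ := fun m =>
      ((m - xbar) ^ 2 + q) * stdNormalCDF ((m - xbar) / Real.sqrt q)
        + (m - xbar) * Real.sqrt (q / (2 * Real.pi)) *
          Real.exp (-((m - xbar) ^ 2) / (2 * q))
    (∀ m, 0 ≤ g m) ∧ Monotone g ∧ ConvexOn ℝ Set.univ g := by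
  intro g
  have hg : g = fun m => q * expectedSqPosPart ((m - xbar) / √q) :=
    funext fun m => (mul_expectedSqPosPart_div_sqrt hq (m - xbar)).symm
  let standardize : ℝ →ᵃ[ℝ] ℝ := (√q)⁻¹ • (AffineMap.id ℝ ℝ - AffineMap.const ℝ ℝ xbar)
  have hstandardize : ∀ m, standardize m = (m - xbar) / √q := fun m => by
    simp [standardize, div_eq_inv_mul]
  refine hg ▸ ⟨fun m => mul_nonneg hq.le (expectedSqPosPart_nonneg _), ?_, ?_⟩
  · refine Monotone.const_mul (fun a b hab => ?_) hq.le
    exact monotone_expectedSqPosPart (div_le_div_of_nonneg_right (by linarith) (sqrt_nonneg q))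
  · simpa [hstandardize] using (convexOn_expectedSqPosPart.comp_affineMap standardize).smul hq.le
end

section
/- For a random vector E in ℝ^d with finite p-th moment and any level N ≥ 1, an L^p optimal quantizer exists: there is a set Γ* ⊂ ℝ^d with |Γ*| ≤ N achieving the infimum of (E[min_{a∈Γ} |E - a|^p])^{1/p} over all sets Γ of cardinality at most N. -/
open MeasureTheory Metric

/-- The `L^p` optimal quantization error at level `N` of a law `μ` on `ℝ^d`. -/
noncomputable def quantError {d : ℕ} (μ : Measure (EuclideanSpace ℝ (Fin d)))
    (p : ℝ) (N : ℕ) : ℝ :=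
  sInf { e : ℝ | ∃ Γ : Finset (EuclideanSpace ℝ (Fin d)), Γ.Nonempty ∧ Γ.card ≤ N ∧
    e = (∫ y, Metric.infDist y (Γ : Set (EuclideanSpace ℝ (Fin d))) ^ p ∂μ) ^ (1 / p) }

/-!
The distortion `∫ d(y, Γ)^p dμ` depends continuously on the codewords, so it attains its
minimum over codebooks confined to a closed ball. We induct on `N`. If an optimal codebook of
level `N - 1` stays optimal at level `N` we are done. Otherwise some codebook of level `N` has
distortion below the optimal distortion `L` of level `N - 1`, and the codebooks of level `N`
with distortion sufficiently below `L` are confined: such a codebook has a codeword near the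
origin (`μ` charges some ball), and discarding its codewords beyond a large radius `R` raises
the distortion by at most `2^p ∫_{|y| > T} |y|^p dμ`, which is small. Were a codeword beyond
`R`, the at most `N - 1` remaining ones would have distortion below `L`.
-/

open Filter Topology Set

lemma Real.add_rpow_le_two_rpow_mul_rpow_add_rpow {a b p : ℝ} (ha : 0 ≤ a) (hb : 0 ≤ b)
    (hp : 0 ≤ p) : (a + b) ^ p ≤ 2 ^ p * (a ^ p + b ^ p) :=
  calc (a + b) ^ p ≤ (2 * max a b) ^ p := by
        gcongr; linarith [le_max_left a b, le_max_right a b]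
    _ = 2 ^ p * max a b ^ p := Real.mul_rpow zero_le_two (ha.trans (le_max_left a b))
    _ ≤ 2 ^ p * (a ^ p + b ^ p) := by
        gcongr
        rcases le_total a b with h | h
        · simp [max_eq_right h, Real.rpow_nonneg ha]
        · simp [max_eq_left h, Real.rpow_nonneg hb]

lemma Finset.exists_fin_range_eq {α : Type*} {N : ℕ} (s : Finset α) (hs : s.Nonempty)
    (hN : s.card ≤ N) : ∃ a : Fin N → α, Set.range a = s := by
  obtain ⟨z, hz⟩ := hs
  refine ⟨fun i => s.toList.getD i z, Set.Subset.antisymm ?_ fun x hx => ?_⟩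
  · rintro _ ⟨i, rfl⟩
    dsimp only
    rcases lt_or_ge (i : ℕ) s.toList.length with h | h
    · rw [mem_coe, List.getD_eq_getElem _ _ h, ← mem_toList]
      exact List.getElem_mem h
    · rwa [List.getD_eq_default _ _ h]
  · obtain ⟨i, hi, rfl⟩ := List.mem_iff_getElem.1 (mem_toList.2 hx)
    exact ⟨⟨i, hi.trans_le (by simpa using hN)⟩, List.getD_eq_getElem _ _ hi⟩

section Metric

variable {E : Type*} [SeminormedAddCommGroup E]

lemma Metric.infDist_le_norm_add_norm {s : Set E} {z : E} (hz : z ∈ s) (y : E) :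
    infDist y s ≤ ‖y‖ + ‖z‖ :=
  (infDist_le_dist_of_mem hz).trans (dist_le_norm_add_norm y z)

lemma Metric.continuous_infDist_rpow {p : ℝ} (hp : 0 ≤ p) (s : Set E) :
    Continuous fun y => infDist y s ^ p :=
  (continuous_infDist_pt s).rpow_const fun _ => Or.inr hp

lemma Metric.lipschitzWith_infDist_range {ι : Type*} [Fintype ι] (y : E) :
    LipschitzWith 1 fun a : ι → E => infDist y (range a) := by
  refine LipschitzWith.of_le_add fun a b => ?_
  rcases isEmpty_or_nonempty ι with hι | hι
  · simp [range_eq_empty]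
  rw [← sub_le_iff_le_add, le_infDist (range_nonempty b)]
  rintro _ ⟨i, rfl⟩
  have := dist_le_pi_dist a b i
  linarith [infDist_le_dist_of_mem (mem_range_self (f := a) i) (x := y),
    dist_triangle_right y (a i) (b i)]

lemma Metric.infDist_le_infDist_of_subset_of_far {C Γ : Set E} (hCΓ : C ⊆ Γ) {z : E}
    (hz : z ∈ C) {ρ T : ℝ} (hzρ : ‖z‖ ≤ ρ) (hfar : ∀ w ∈ Γ \ C, ρ + 2 * T < ‖w‖) {y : E}
    (hy : ‖y‖ ≤ T) : infDist y C ≤ infDist y Γ := by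
  rw [le_infDist ⟨z, hCΓ hz⟩]
  intro w hw
  by_cases hwC : w ∈ C
  · exact infDist_le_dist_of_mem hwC
  have := norm_sub_norm_le w y
  have := hfar w ⟨hw, hwC⟩
  rw [dist_comm, dist_eq_norm]
  linarith [infDist_le_norm_add_norm hz y]

end Metric

variable {E : Type*} [NormedAddCommGroup E] [MeasurableSpace E] {μ : Measure E} {p : ℝ}

variable (μ p) in
noncomputable def distortion (s : Set E) : ℝ := ∫ y, infDist y s ^ p ∂μ

variable (μ p) in
def IsOptimalQuantizer (N : ℕ) (Γ : Finset E) : Prop :=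
  Γ.Nonempty ∧ Γ.card ≤ N ∧ ∀ Γ' : Finset E, Γ'.Nonempty → Γ'.card ≤ N →
    distortion μ p Γ ≤ distortion μ p Γ'

lemma distortion_nonneg (s : Set E) : 0 ≤ distortion μ p s :=
  integral_nonneg fun _ => Real.rpow_nonneg infDist_nonneg p

lemma exists_measureReal_closedBall_pos [IsFiniteMeasure μ] [NeZero μ] :
    ∃ n : ℕ, 0 < μ.real (closedBall 0 n) := by
  have : μ (⋃ n : ℕ, closedBall (0 : E) n) ≠ 0 := by
    rw [iUnion_closedBall_nat]; exact NeZero.ne _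
  obtain ⟨n, hn⟩ := not_forall.1 (mt measure_iUnion_null_iff.2 this)
  exact ⟨n, ENNReal.toReal_pos hn (measure_ne_top μ _)⟩

variable [OpensMeasurableSpace E]

lemma MeasureTheory.Integrable.tendsto_setIntegral_norm_gt {f : E → ℝ} (hf : Integrable f μ) :
    Tendsto (fun T : ℝ => ∫ y in {y | T < ‖y‖}, f y ∂μ) atTop (𝓝 0) := by
  have hempty : (⋂ T : ℝ, {y : E | T < ‖y‖}) = ∅ :=
    eq_empty_of_forall_notMem fun y hy => lt_irrefl ‖y‖ (mem_iInter.1 hy ‖y‖)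
  simpa [hempty] using tendsto_setIntegral_of_antitone
    (fun T => measurableSet_lt measurable_const measurable_norm)
    (fun T T' h y (hy : T' < ‖y‖) => h.trans_lt hy) ⟨0, hf.integrableOn⟩

section FiniteMeasure

variable [IsFiniteMeasure μ]

lemma integrable_norm_add_rpow (hp : 0 ≤ p) (hmom : Integrable (fun y => ‖y‖ ^ p) μ)
    {c : ℝ} (hc : 0 ≤ c) : Integrable (fun y => (‖y‖ + c) ^ p) μ := by
  refine ((hmom.add (integrable_const (c ^ p))).const_mul (2 ^ p)).mono'
    (by fun_prop) (ae_of_all _ fun y => ?_)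
  rw [Real.norm_of_nonneg (by positivity)]
  exact Real.add_rpow_le_two_rpow_mul_rpow_add_rpow (norm_nonneg y) hc hp

lemma integrable_infDist_rpow (hp : 0 ≤ p) (hmom : Integrable (fun y => ‖y‖ ^ p) μ)
    {s : Set E} (hs : s.Nonempty) : Integrable (fun y => infDist y s ^ p) μ := by
  obtain ⟨z, hz⟩ := hs
  refine (integrable_norm_add_rpow hp hmom (norm_nonneg z)).mono'
    (continuous_infDist_rpow hp s).aestronglyMeasurable (ae_of_all _ fun y => ?_)
  rw [Real.norm_of_nonneg (Real.rpow_nonneg infDist_nonneg p)]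
  exact Real.rpow_le_rpow infDist_nonneg (infDist_le_norm_add_norm hz y) hp

lemma mul_measureReal_closedBall_le_distortion (hp : 0 ≤ p)
    (hmom : Integrable (fun y => ‖y‖ ^ p) μ) {s : Set E} (hs : s.Nonempty) {r ρ : ℝ}
    (hrρ : r ≤ ρ) (hfar : ∀ x ∈ s, ρ < ‖x‖) :
    (ρ - r) ^ p * μ.real (closedBall 0 r) ≤ distortion μ p s := by
  have hint := integrable_infDist_rpow hp hmom hs
  have hle : ∀ y ∈ closedBall (0 : E) r, (ρ - r) ^ p ≤ infDist y s ^ p := by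
    intro y hy
    rw [mem_closedBall_zero_iff] at hy
    refine Real.rpow_le_rpow (sub_nonneg.2 hrρ) ((le_infDist hs).2 fun x hx => ?_) hp
    rw [dist_comm, dist_eq_norm]
    linarith [norm_sub_norm_le x y, hfar x hx]
  calc (ρ - r) ^ p * μ.real (closedBall 0 r)
      = ∫ _ in closedBall (0 : E) r, (ρ - r) ^ p ∂μ := by
        rw [setIntegral_const, smul_eq_mul, mul_comm]
    _ ≤ ∫ y in closedBall (0 : E) r, infDist y s ^ p ∂μ :=
        setIntegral_mono_on integrableOn_const hint.integrableOn measurableSet_closedBall hle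
    _ ≤ distortion μ p s :=
        setIntegral_le_integral hint (ae_of_all _ fun _ => Real.rpow_nonneg infDist_nonneg p)

lemma exists_norm_le_of_distortion_lt [NeZero μ] (hp : 0 < p)
    (hmom : Integrable (fun y => ‖y‖ ^ p) μ) (L : ℝ) :
    ∃ ρ : ℝ, 0 ≤ ρ ∧ ∀ s : Set E, distortion μ p s < L → s.Nonempty → ∃ z ∈ s, ‖z‖ ≤ ρ := by
  obtain ⟨r, hr⟩ := exists_measureReal_closedBall_pos (μ := μ)
  set t := (|L| / μ.real (closedBall 0 r)) ^ p⁻¹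
  have ht : t ^ p = |L| / μ.real (closedBall 0 r) :=
    Real.rpow_inv_rpow (by positivity) hp.ne'
  refine ⟨r + t, by positivity, fun s hs hne => ?_⟩
  by_contra! hfar
  have := mul_measureReal_closedBall_le_distortion hp.le hmom hne
    (le_add_of_nonneg_right (by positivity : 0 ≤ t)) hfar
  rw [add_sub_cancel_left, ht, div_mul_cancel₀ _ hr.ne'] at this
  linarith [le_abs_self L]

lemma distortion_le_add_tail (hp : 0 ≤ p) (hmom : Integrable (fun y => ‖y‖ ^ p) μ)
    {C Γ : Set E} (hCΓ : C ⊆ Γ) {z : E} (hz : z ∈ C) {ρ T : ℝ} (hzρ : ‖z‖ ≤ ρ) (hρT : ρ ≤ T)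
    (hfar : ∀ w ∈ Γ \ C, ρ + 2 * T < ‖w‖) :
    distortion μ p C ≤ distortion μ p Γ + 2 ^ p * ∫ y in {y | T < ‖y‖}, ‖y‖ ^ p ∂μ := by
  have hT : MeasurableSet {y : E | T < ‖y‖} := measurableSet_lt measurable_const measurable_norm
  have hpt : ∀ y, infDist y C ^ p ≤
      infDist y Γ ^ p + {y : E | T < ‖y‖}.indicator (fun y => 2 ^ p * ‖y‖ ^ p) y := by
    intro y
    by_cases hy : ‖y‖ ≤ T
    · rw [indicator_of_notMem (show y ∉ {y : E | T < ‖y‖} from not_lt.2 hy), add_zero]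
      exact Real.rpow_le_rpow infDist_nonneg
        (infDist_le_infDist_of_subset_of_far hCΓ hz hzρ hfar hy) hp
    · rw [indicator_of_mem (show y ∈ {y : E | T < ‖y‖} from not_le.1 hy),
        ← Real.mul_rpow zero_le_two (norm_nonneg y)]
      have : infDist y C ≤ 2 * ‖y‖ := by linarith [infDist_le_norm_add_norm hz y]
      linarith [Real.rpow_nonneg (infDist_nonneg (x := y) (s := Γ)) p,
        Real.rpow_le_rpow infDist_nonneg this hp]
  have hΓ := integrable_infDist_rpow hp hmom ⟨z, hCΓ hz⟩
  have hind := (hmom.const_mul (2 ^ p)).indicator hT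
  calc distortion μ p C
      ≤ ∫ y, infDist y Γ ^ p + {y : E | T < ‖y‖}.indicator (fun y => 2 ^ p * ‖y‖ ^ p) y ∂μ :=
        integral_mono (integrable_infDist_rpow hp hmom ⟨z, hz⟩) (hΓ.add hind) hpt
    _ = distortion μ p Γ + 2 ^ p * ∫ y in {y | T < ‖y‖}, ‖y‖ ^ p ∂μ := by
        rw [integral_add hΓ hind, integral_indicator hT, integral_const_mul]
        rfl

lemma exists_subset_closedBall_of_distortion_lt [NeZero μ] (hp : 0 < p)
    (hmom : Integrable (fun y => ‖y‖ ^ p) μ) {N : ℕ} {L η : ℝ} (hη : 0 < η)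
    (hL : ∀ C : Finset E, C.Nonempty → C.card < N → L ≤ distortion μ p C) :
    ∃ R : ℝ, ∀ Γ : Finset E, Γ.card ≤ N → distortion μ p Γ < L - η → Γ.Nonempty →
      (Γ : Set E) ⊆ closedBall 0 R := by
  classical
  obtain ⟨ρ, hρ0, hρ⟩ := exists_norm_le_of_distortion_lt hp hmom L
  obtain ⟨T, hρT, hT⟩ := ((eventually_ge_atTop ρ).and
    ((hmom.tendsto_setIntegral_norm_gt).eventually
      (gt_mem_nhds (div_pos hη (by positivity : (0 : ℝ) < 2 ^ p))))).exists
  refine ⟨ρ + 2 * T, fun Γ hcard hΓ hne => ?_⟩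
  by_contra! hout
  obtain ⟨w, hwΓ, hw⟩ := not_subset.1 hout
  rw [mem_closedBall_zero_iff, not_le] at hw
  obtain ⟨z, hzΓ, hzρ⟩ := hρ Γ (by linarith) (by exact_mod_cast hne)
  set C := Γ.filter fun x => ‖x‖ ≤ ρ + 2 * T
  have hzC : z ∈ C := Finset.mem_filter.2 ⟨hzΓ, by linarith⟩
  have hCΓ : C ⊂ Γ := Finset.filter_ssubset.2 ⟨w, hwΓ, hw.not_ge⟩
  have hCcard : C.card < N := (Finset.card_lt_card hCΓ).trans_le hcard
  have hsurgery := distortion_le_add_tail hp.le hmom (Finset.coe_subset.2 hCΓ.subset)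
    hzC hzρ hρT fun w hw => not_le.1 fun h => hw.2 (Finset.mem_filter.2 ⟨hw.1, h⟩)
  have := hL C ⟨z, hzC⟩ hCcard
  have := (lt_div_iff₀' (by positivity : (0 : ℝ) < 2 ^ p)).1 hT
  linarith

lemma continuousOn_distortion_range (hp : 0 ≤ p) (hmom : Integrable (fun y => ‖y‖ ^ p) μ)
    (N : ℕ) {R : ℝ} (hR : 0 ≤ R) :
    ContinuousOn (fun a : Fin N → E => distortion μ p (range a))
      (univ.pi fun _ => closedBall 0 R) := by
  refine continuousOn_of_dominated
    (fun a _ => (continuous_infDist_rpow hp _).aestronglyMeasurable)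
    (fun a ha => ae_of_all _ fun y => ?_) (integrable_norm_add_rpow hp hmom hR)
    (ae_of_all _ fun y => ((lipschitzWith_infDist_range y).continuous.rpow_const
      fun _ => Or.inr hp).continuousOn)
  rw [Real.norm_of_nonneg (Real.rpow_nonneg infDist_nonneg p)]
  refine Real.rpow_le_rpow infDist_nonneg ?_ hp
  rcases isEmpty_or_nonempty (Fin N) with hN | ⟨⟨i⟩⟩
  · simp only [range_eq_empty, infDist_empty]; positivity
  · have := mem_closedBall_zero_iff.1 (ha i (mem_univ i))
    linarith [infDist_le_norm_add_norm (mem_range_self i) y (s := range a)]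

lemma exists_isOptimalQuantizer_of_confined [ProperSpace E] (hp : 0 ≤ p)
    (hmom : Integrable (fun y => ‖y‖ ^ p) μ) {N : ℕ} {R c : ℝ}
    (hconf : ∀ Γ : Finset E, Γ.card ≤ N → distortion μ p Γ < c → Γ.Nonempty →
      (Γ : Set E) ⊆ closedBall 0 R)
    {Γ₁ : Finset E} (hne₁ : Γ₁.Nonempty) (hcard₁ : Γ₁.card ≤ N) (h₁ : distortion μ p Γ₁ < c) :
    ∃ Γ, IsOptimalQuantizer μ p N Γ := by
  classical
  set K : Set (Fin N → E) := univ.pi fun _ => closedBall 0 R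
  have hmemK : ∀ Γ : Finset E, Γ.card ≤ N → distortion μ p Γ < c → Γ.Nonempty →
      ∃ a ∈ K, range a = Γ := fun Γ hcard hΓ hne => by
    obtain ⟨a, ha⟩ := Γ.exists_fin_range_eq hne hcard
    exact ⟨a, fun i _ => hconf Γ hcard hΓ hne (ha ▸ mem_range_self i), ha⟩
  obtain ⟨a₁, ha₁K, ha₁⟩ := hmemK Γ₁ hcard₁ h₁ hne₁
  have hR : 0 ≤ R := nonempty_closedBall.1 ⟨_, hconf Γ₁ hcard₁ h₁ hne₁ hne₁.choose_spec⟩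
  obtain ⟨a, -, hmin⟩ := (isCompact_univ_pi fun _ => isCompact_closedBall 0 R).exists_isMinOn
    ⟨a₁, ha₁K⟩ (continuousOn_distortion_range hp hmom N hR)
  have hrange : ((Finset.univ.image a : Finset E) : Set E) = range a := by simp
  refine ⟨Finset.univ.image a, ?_, Finset.card_image_le.trans (by simp), fun Γ hne hcard => ?_⟩
  · have : Nonempty (Fin N) := range_nonempty_iff_nonempty.1 (ha₁ ▸ Finset.coe_nonempty.2 hne₁)
    exact Finset.univ_nonempty.image a
  rw [hrange]
  by_cases hΓ : distortion μ p Γ < c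
  · obtain ⟨b, hbK, hb⟩ := hmemK Γ hcard hΓ hne
    exact hb ▸ hmin hbK
  · calc distortion μ p (range a) ≤ distortion μ p Γ₁ := ha₁ ▸ hmin ha₁K
      _ ≤ distortion μ p Γ := by linarith

variable [NeZero μ] [ProperSpace E]

lemma exists_isOptimalQuantizer_of_distortion_lt (hp : 0 < p)
    (hmom : Integrable (fun y => ‖y‖ ^ p) μ) {N : ℕ} {L : ℝ}
    (hL : ∀ C : Finset E, C.Nonempty → C.card < N → L ≤ distortion μ p C)
    {Γ₁ : Finset E} (hne₁ : Γ₁.Nonempty) (hcard₁ : Γ₁.card ≤ N) (h₁ : distortion μ p Γ₁ < L) :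
    ∃ Γ, IsOptimalQuantizer μ p N Γ := by
  obtain ⟨R, hR⟩ := exists_subset_closedBall_of_distortion_lt hp hmom
    (by linarith : 0 < (L - distortion μ p Γ₁) / 2) hL
  exact exists_isOptimalQuantizer_of_confined hp.le hmom hR hne₁ hcard₁ (by linarith)

lemma exists_isOptimalQuantizer (hp : 0 < p) (hmom : Integrable (fun y => ‖y‖ ^ p) μ)
    {N : ℕ} (hN : 1 ≤ N) : ∃ Γ, IsOptimalQuantizer μ p N Γ := by
  induction N, hN using Nat.le_induction with
  | base =>
    refine exists_isOptimalQuantizer_of_distortion_lt hp hmom (L := distortion μ p {0} + 1)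
      (fun C hC hcard => absurd hC ?_) (Finset.singleton_nonempty 0) (by simp) (by simp)
    simpa [Finset.card_eq_zero, Nat.lt_one_iff] using hcard
  | succ N _ ih =>
    obtain ⟨Γ₀, hne₀, hcard₀, hopt₀⟩ := ih
    by_cases h : ∀ Γ : Finset E, Γ.Nonempty → Γ.card ≤ N + 1 →
        distortion μ p Γ₀ ≤ distortion μ p Γ
    · exact ⟨Γ₀, hne₀, hcard₀.trans N.le_succ, h⟩
    push Not at h
    obtain ⟨Γ₁, hne₁, hcard₁, h₁⟩ := h
    exact exists_isOptimalQuantizer_of_distortion_lt hp hmom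
      (fun C hC hcard => hopt₀ C hC (Nat.lt_succ_iff.1 hcard)) hne₁ hcard₁ h₁

end FiniteMeasure

/-- Existence of an `L^p` optimal quantizer at each level `N ≥ 1`. -/
theorem optimal_quantizer_exists {d : ℕ}
    (μ : Measure (EuclideanSpace ℝ (Fin d))) [IsProbabilityMeasure μ]
    (p : ℝ) (hp : 1 ≤ p)
    (hmom : Integrable (fun y => ‖y‖ ^ p) μ)
    (N : ℕ) (hN : 1 ≤ N) :
    ∃ Γ : Finset (EuclideanSpace ℝ (Fin d)), Γ.Nonempty ∧ Γ.card ≤ N ∧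
      (∫ y, Metric.infDist y (Γ : Set (EuclideanSpace ℝ (Fin d))) ^ p ∂μ) ^ (1 / p) =
        quantError μ p N := by
  have hp₀ : 0 < p := zero_lt_one.trans_le hp
  obtain ⟨Γ, hne, hcard, hopt⟩ := exists_isOptimalQuantizer hp₀ hmom hN
  have hleast : IsLeast {e : ℝ | ∃ Γ : Finset (EuclideanSpace ℝ (Fin d)), Γ.Nonempty ∧
      Γ.card ≤ N ∧ e = distortion μ p Γ ^ (1 / p)} (distortion μ p Γ ^ (1 / p)) := by
    refine ⟨⟨Γ, hne, hcard, rfl⟩, ?_⟩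
    rintro _ ⟨Γ', hne', hcard', rfl⟩
    exact Real.rpow_le_rpow (distortion_nonneg _) (hopt Γ' hne' hcard') (by positivity)
  exact ⟨Γ, hne, hcard, hleast.csInf_eq.symm⟩
end
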